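/- Let Ω ⊂ ℂ³ be a bounded domain containing the origin such that for every s ∈ {1, 2, 3}, every ∂̄-closed (0,s)-form on Ω with bounded smooth coefficients equals ∂̄u for some (0,s−1)-form u with bounded smooth coefficients. Let w¹, w², w³ be (0,1)-forms on Ω with bounded smooth coefficients such that: (i) each w^j is ∂̄-closed; (ii) z_1 w¹ + z_2 w² + z_3 w³ = 0 coefficientwise on Ω; (iii) there is ε > 0 such that all coefficients of w¹, w², w³ vanish on {z ∈ Ω : |z| < ε}. Then there exist bounded smooth functions y_1, y_2, y_3 : Ω → ℂ such that, as (0,1)-forms on Ω, w¹ = −z_2 ∂̄y_3 − z_3 ∂̄y_2, w² = z_1 ∂̄y_3 − z_3 ∂̄y_1, and w³ = z_1 ∂̄y_2 + z_2 ∂̄y_1. -/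

import Mathlib

/-- The Wirtinger derivative `∂f/∂z̄_j` of `f : ℂⁿ → ℂ` at `z`, computed from the real
Fréchet derivative: `(1/2)(∂f/∂x_j + i ∂f/∂y_j)`. -/
noncomputable def wdbar {n : ℕ} (f : (Fin n → ℂ) → ℂ) (j : Fin n) (z : Fin n → ℂ) : ℂ :=
  (1 / 2) * (fderiv ℝ f z (Pi.single j 1) + Complex.I * fderiv ℝ f z (Pi.single j Complex.I))

/-- `f` is bounded on `Ω` and smooth (in the underlying real variables) on `Ω`. -/
def BddSmoothOn {n : ℕ} (Ω : Set (Fin n → ℂ)) (f : (Fin n → ℂ) → ℂ) : Prop :=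
  ContDiffOn ℝ (⊤ : ℕ∞) f Ω ∧ ∃ C, ∀ z ∈ Ω, ‖f z‖ ≤ C

/-- The coefficient family of a `(0,s)`-form is alternating in its indices. -/
def AltForm {n s : ℕ} (β : (Fin s → Fin n) → (Fin n → ℂ) → ℂ) : Prop :=
  ∀ (J : Fin s → Fin n) (σ : Equiv.Perm (Fin s)) (z : Fin n → ℂ),
    β (J ∘ σ) z = ((Equiv.Perm.sign σ : ℤ) : ℂ) * β J z

/-- The `∂̄`-derivative of a `(0,s)`-form, as a `(0,s+1)`-form:
`(∂̄β)_{j₀…j_s} = Σ_{k} (−1)^k ∂β_{j₀…ĵ_k…j_s}/∂z̄_{j_k}`. -/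
noncomputable def dbarF {n s : ℕ} (β : (Fin s → Fin n) → (Fin n → ℂ) → ℂ) :
    (Fin (s + 1) → Fin n) → (Fin n → ℂ) → ℂ :=
  fun J z => ∑ k : Fin (s + 1), (-1 : ℂ) ^ (k : ℕ) * wdbar (β (J ∘ k.succAbove)) (J k) z

/-!
Away from the origin the coordinates are unimodular: with a cutoff `ρ(t) = 1/t` for large `t`,
`e = ρ(|z|²) z̄` satisfies `∑ zⱼ eⱼ = 1` wherever `W = (W₀, W₁, W₂)` does not vanish, so
`α = e ∧ W` is a bounded smooth primitive, `z ⌟ α = W`. Then `z ⌟ ∂̄α = ∂̄W = 0`, and exactness of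
the Koszul complex of `z` in degree two gives `∂̄α = z ⌟ (G dz₀ ∧ dz₁ ∧ dz₂)`, where `G` is again
bounded and smooth. Since `zᵢ ∂̄G = ∂̄∂̄α_{i+1,i+2} = 0`, the form `G` is `∂̄`-closed; solving `∂̄v = G`
makes each `α_{i+1,i+2} - zᵢ v` closed, hence equal to `∂̄Yᵢ`, and contracting with `z` gives
`W = ∂̄Y × z`.
-/

open Complex Filter Topology Bornology

section Wirtinger

variable {n : ℕ} {f g : (Fin n → ℂ) → ℂ} {j : Fin n} {z : Fin n → ℂ}

lemma wdbar_congr (h : f =ᶠ[𝓝 z] g) : wdbar f j z = wdbar g j z := by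
  rw [wdbar, wdbar, h.fderiv_eq]

lemma wdbar_const (c : ℂ) : wdbar (fun _ : Fin n → ℂ => c) j z = 0 := by
  simp [wdbar]

lemma wdbar_eq_zero_of_eqOn {U : Set (Fin n → ℂ)} (hU : IsOpen U) (hz : z ∈ U)
    (hf : ∀ w ∈ U, f w = 0) : wdbar f j z = 0 :=
  (wdbar_congr (g := fun _ => 0) (eventually_of_mem (hU.mem_nhds hz) hf)).trans (wdbar_const 0)

lemma wdbar_neg : wdbar (fun w => -f w) j z = -wdbar f j z := by
  rw [wdbar, wdbar, fderiv_fun_neg]; simp only [neg_apply]; ring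

lemma wdbar_sub (hf : DifferentiableAt ℝ f z) (hg : DifferentiableAt ℝ g z) :
    wdbar (fun w => f w - g w) j z = wdbar f j z - wdbar g j z := by
  rw [wdbar, wdbar, wdbar, fderiv_fun_sub hf hg]
  simp only [sub_apply]; ring

lemma wdbar_mul (hf : DifferentiableAt ℝ f z) (hg : DifferentiableAt ℝ g z) :
    wdbar (fun w => f w * g w) j z = f z * wdbar g j z + g z * wdbar f j z := by
  rw [wdbar, wdbar, wdbar, fderiv_fun_mul hf hg]
  simp only [add_apply, smul_apply, smul_eq_mul]; ring

lemma wdbar_sum {ι : Type*} (s : Finset ι) {F : ι → (Fin n → ℂ) → ℂ}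
    (hF : ∀ i ∈ s, DifferentiableAt ℝ (F i) z) :
    wdbar (fun w => ∑ i ∈ s, F i w) j z = ∑ i ∈ s, wdbar (F i) j z := by
  simp only [wdbar, fderiv_fun_sum hF, sum_apply, Finset.mul_sum, ← Finset.sum_add_distrib]

lemma wdbar_coord (i : Fin n) : wdbar (fun w : Fin n → ℂ => w i) j z = 0 := by
  rw [wdbar, (hasFDerivAt_apply i z).fderiv]
  rcases eq_or_ne i j with rfl | h
  · simp
  · simp [h]

lemma wdbar_coord_mul (hf : DifferentiableAt ℝ f z) (i : Fin n) :
    wdbar (fun w => w i * f w) j z = z i * wdbar f j z := by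
  rw [wdbar_mul (differentiableAt_apply i z) hf, wdbar_coord]; ring

lemma ContDiffOn.wdbar {Ω : Set (Fin n → ℂ)} (hΩ : IsOpen Ω) (hf : ContDiffOn ℝ (⊤ : ℕ∞) f Ω)
    (j : Fin n) : ContDiffOn ℝ (⊤ : ℕ∞) (wdbar f j) Ω := by
  have hdf : ContDiffOn ℝ (⊤ : ℕ∞) (fderiv ℝ f) Ω := hf.fderiv_of_isOpen hΩ (by simp)
  have happ (v : Fin n → ℂ) : ContDiffOn ℝ (⊤ : ℕ∞) (fun z => fderiv ℝ f z v) Ω :=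
    (ContinuousLinearMap.apply ℝ ℂ v).contDiff.comp_contDiffOn hdf
  exact contDiffOn_const.mul ((happ _).add (contDiffOn_const.mul (happ _)))

lemma ContDiffOn.differentiableAt_of_isOpen {Ω : Set (Fin n → ℂ)} (hΩ : IsOpen Ω)
    (hf : ContDiffOn ℝ (⊤ : ℕ∞) f Ω) (hz : z ∈ Ω) : DifferentiableAt ℝ f z :=
  (hf.differentiableOn (by simp)).differentiableAt (hΩ.mem_nhds hz)

/-- By symmetry of the real second derivative. -/
lemma wdbar_wdbar_comm {Ω : Set (Fin n → ℂ)} (hΩ : IsOpen Ω) (hf : ContDiffOn ℝ (⊤ : ℕ∞) f Ω)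
    (hz : z ∈ Ω) (k l : Fin n) : wdbar (wdbar f l) k z = wdbar (wdbar f k) l z := by
  have hdf : ContDiffAt ℝ (⊤ : ℕ∞) (fderiv ℝ f) z :=
    (hf.contDiffAt (hΩ.mem_nhds hz)).fderiv_right (by simp)
  set H := fderiv ℝ (fderiv ℝ f) z
  have hH : HasFDerivAt (fderiv ℝ f) H z := (hdf.differentiableAt (by simp)).hasFDerivAt
  have hsymm (u v : Fin n → ℂ) : H u v = H v u := by
    refine second_derivative_symmetric_of_eventually (f := f) ?_ hH u v
    filter_upwards [hΩ.mem_nhds hz] with y hy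
    exact (hf.differentiableAt_of_isOpen hΩ hy).hasFDerivAt
  have hderiv (j : Fin n) : HasFDerivAt (wdbar f j)
      ((1 / 2 : ℂ) • ((ContinuousLinearMap.apply ℝ ℂ (Pi.single j 1)).comp H
        + I • (ContinuousLinearMap.apply ℝ ℂ (Pi.single j I)).comp H)) z :=
    (((ContinuousLinearMap.apply ℝ ℂ _).hasFDerivAt.comp z hH).add
      (((ContinuousLinearMap.apply ℝ ℂ _).hasFDerivAt.comp z hH).const_mul I)).const_mul _
  rw [wdbar, wdbar, (hderiv l).fderiv, (hderiv k).fderiv]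
  simp only [smul_apply, add_apply, ContinuousLinearMap.comp_apply,
    ContinuousLinearMap.apply_apply, smul_eq_mul]
  rw [hsymm (Pi.single k 1) (Pi.single l 1), hsymm (Pi.single k I) (Pi.single l 1),
    hsymm (Pi.single k 1) (Pi.single l I), hsymm (Pi.single k I) (Pi.single l I)]
  ring

end Wirtinger

namespace BddSmoothOn

variable {n : ℕ} {Ω : Set (Fin n → ℂ)} {f g : (Fin n → ℂ) → ℂ}

lemma congr (hf : BddSmoothOn Ω f) (h : Set.EqOn g f Ω) : BddSmoothOn Ω g := by
  obtain ⟨hs, C, hC⟩ := hf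
  exact ⟨hs.congr h, C, fun z hz => h hz ▸ hC z hz⟩

lemma neg (hf : BddSmoothOn Ω f) : BddSmoothOn Ω (fun z => -f z) := by
  obtain ⟨hs, C, hC⟩ := hf
  exact ⟨hs.neg, C, fun z hz => (norm_neg (f z)).trans_le (hC z hz)⟩

lemma add (hf : BddSmoothOn Ω f) (hg : BddSmoothOn Ω g) : BddSmoothOn Ω (fun z => f z + g z) := by
  obtain ⟨hfs, C, hC⟩ := hf
  obtain ⟨hgs, D, hD⟩ := hg
  exact ⟨hfs.add hgs, C + D, fun z hz => (norm_add_le _ _).trans (add_le_add (hC z hz) (hD z hz))⟩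

lemma sub (hf : BddSmoothOn Ω f) (hg : BddSmoothOn Ω g) : BddSmoothOn Ω (fun z => f z - g z) := by
  simpa only [sub_eq_add_neg] using hf.add hg.neg

lemma mul (hf : BddSmoothOn Ω f) (hg : BddSmoothOn Ω g) : BddSmoothOn Ω (fun z => f z * g z) := by
  obtain ⟨hfs, C, hC⟩ := hf
  obtain ⟨hgs, D, hD⟩ := hg
  refine ⟨hfs.mul hgs, |C| * |D|, fun z hz => ?_⟩
  rw [norm_mul]
  exact mul_le_mul ((hC z hz).trans (le_abs_self C)) ((hD z hz).trans (le_abs_self D))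
    (norm_nonneg _) (abs_nonneg _)

lemma of_contDiff (hΩ : IsBounded Ω) (hf : ContDiff ℝ (⊤ : ℕ∞) f) : BddSmoothOn Ω f := by
  obtain ⟨C, hC⟩ := (hΩ.isCompact_closure).exists_bound_of_continuousOn hf.continuous.continuousOn
  exact ⟨hf.contDiffOn, C, fun z hz => hC z (subset_closure hz)⟩

lemma sum {ι : Type*} (s : Finset ι) {F : ι → (Fin n → ℂ) → ℂ}
    (hF : ∀ i ∈ s, BddSmoothOn Ω (F i)) : BddSmoothOn Ω (fun z => ∑ i ∈ s, F i z) := by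
  classical
  induction s using Finset.induction_on with
  | empty => exact ⟨contDiffOn_const, 0, fun z _ => by simp⟩
  | insert i s hi ih =>
    simp only [Finset.sum_insert hi]
    exact (hF i (s.mem_insert_self i)).add (ih fun j hj => hF j (Finset.mem_insert_of_mem hj))

lemma coord (hΩ : IsBounded Ω) (i : Fin n) : BddSmoothOn Ω (fun z => z i) :=
  of_contDiff hΩ (contDiff_apply ℝ ℂ i)

end BddSmoothOn

section Forms

variable {n : ℕ}

/-- The `∂̄` of the `(0,1)`-form with coefficients `P m`; its `(k, l)` coefficient. -/
noncomputable def dbarOne (P : Fin n → (Fin n → ℂ) → ℂ) (k l : Fin n) (z : Fin n → ℂ) : ℂ :=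
  wdbar (P l) k z - wdbar (P k) l z

lemma dbarOne_swap (P : Fin n → (Fin n → ℂ) → ℂ) (k l : Fin n) (z : Fin n → ℂ) :
    dbarOne P l k z = -dbarOne P k l z := by
  rw [dbarOne, dbarOne, neg_sub]

lemma dbarOne_sub_coord_mul {P v : Fin n → (Fin n → ℂ) → ℂ} {z : Fin n → ℂ}
    (hP : ∀ m, DifferentiableAt ℝ (P m) z) (hv : ∀ m, DifferentiableAt ℝ (v m) z) (i k l : Fin n) :
    dbarOne (fun m w => P m w - w i * v m w) k l z = dbarOne P k l z - z i * dbarOne v k l z := by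
  have h (m c : Fin n) : wdbar (fun w => P m w - w i * v m w) c z
      = wdbar (P m) c z - z i * wdbar (v m) c z := by
    rw [wdbar_sub (hP m) ((differentiableAt_apply i z).fun_mul (hv m)), wdbar_coord_mul (hv m)]
  simp only [dbarOne, h]
  ring

lemma dbarF_fin_zero (u : (Fin 0 → Fin n) → (Fin n → ℂ) → ℂ) (J : Fin 1 → Fin n)
    (z : Fin n → ℂ) : dbarF u J z = wdbar (u Fin.elim0) (J 0) z := by
  simp [dbarF, Subsingleton.elim (J ∘ Fin.succ) Fin.elim0]

lemma dbarF_fin_one (u : (Fin 1 → Fin n) → (Fin n → ℂ) → ℂ) (J : Fin 2 → Fin n)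
    (z : Fin n → ℂ) : dbarF u J z = dbarOne (fun m => u fun _ => m) (J 0) (J 1) z := by
  have h0 : J ∘ Fin.succ = fun _ => J 1 := funext fun i => by fin_cases i; rfl
  have h1 : J ∘ Fin.succAbove 1 = fun _ => J 0 := funext fun i => by fin_cases i; rfl
  simp [dbarF, dbarOne, Fin.sum_univ_two, h0, h1, sub_eq_add_neg]

lemma dbarF_fin_two (G : Fin n → Fin n → (Fin n → ℂ) → ℂ) (J : Fin 3 → Fin n)
    (z : Fin n → ℂ) :
    dbarF (fun K => G (K 0) (K 1)) J z
      = wdbar (G (J 1) (J 2)) (J 0) z - wdbar (G (J 0) (J 2)) (J 1) z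
        + wdbar (G (J 0) (J 1)) (J 2) z := by
  simp [dbarF, Fin.sum_univ_three, Fin.succAbove, sub_eq_add_neg]

lemma dbarF_dbarOne {Ω : Set (Fin n → ℂ)} (hΩ : IsOpen Ω) {P : Fin n → (Fin n → ℂ) → ℂ}
    (hP : ∀ m, ContDiffOn ℝ (⊤ : ℕ∞) (P m) Ω) (J : Fin 3 → Fin n) {z : Fin n → ℂ} (hz : z ∈ Ω) :
    dbarF (fun K => dbarOne P (K 0) (K 1)) J z = 0 := by
  have hd (m j : Fin n) : DifferentiableAt ℝ (wdbar (P m) j) z :=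
    ((hP m).wdbar hΩ j).differentiableAt_of_isOpen hΩ hz
  rw [dbarF_fin_two]
  unfold dbarOne
  rw [wdbar_sub (hd _ _) (hd _ _), wdbar_sub (hd _ _) (hd _ _), wdbar_sub (hd _ _) (hd _ _),
    wdbar_wdbar_comm hΩ (hP (J 2)) hz (J 0) (J 1), wdbar_wdbar_comm hΩ (hP (J 1)) hz (J 0) (J 2),
    wdbar_wdbar_comm hΩ (hP (J 0)) hz (J 1) (J 2)]
  ring

lemma altForm_fin_one (P : Fin n → (Fin n → ℂ) → ℂ) : AltForm fun J : Fin 1 → Fin n => P (J 0) := by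
  intro J σ z
  simp [Subsingleton.elim σ 1]

lemma altForm_fin_two {G : Fin n → Fin n → (Fin n → ℂ) → ℂ} (hG : ∀ k l z, G l k z = -G k l z) :
    AltForm fun K : Fin 2 → Fin n => G (K 0) (K 1) := by
  intro J σ z
  obtain rfl | rfl : σ = 1 ∨ σ = Equiv.swap 0 1 := by revert σ; decide
  · simp
  · simp only [Function.comp_apply, Equiv.swap_apply_left, Equiv.swap_apply_right,
      Equiv.Perm.sign_swap zero_ne_one, hG (J 0) (J 1) z]
    simp

end Forms

section Solvability

variable {n : ℕ} {Ω : Set (Fin n → ℂ)}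

def DbarSolvableOn (Ω : Set (Fin n → ℂ)) (t : ℕ) : Prop :=
  ∀ β : (Fin (t + 1) → Fin n) → (Fin n → ℂ) → ℂ,
    (∀ J, BddSmoothOn Ω (β J)) → AltForm β → (∀ J, ∀ z ∈ Ω, dbarF β J z = 0) →
    ∃ u : (Fin t → Fin n) → (Fin n → ℂ) → ℂ,
      (∀ J, BddSmoothOn Ω (u J)) ∧ AltForm u ∧ ∀ J, ∀ z ∈ Ω, dbarF u J z = β J z

lemma DbarSolvableOn.exists_wdbar_eq (hsolv : DbarSolvableOn Ω 0)
    {P : Fin n → (Fin n → ℂ) → ℂ} (hP : ∀ m, BddSmoothOn Ω (P m))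
    (hclosed : ∀ k l, ∀ z ∈ Ω, dbarOne P k l z = 0) :
    ∃ y, BddSmoothOn Ω y ∧ ∀ m, ∀ z ∈ Ω, wdbar y m z = P m z := by
  obtain ⟨u, hu, -, hdu⟩ := hsolv (fun J : Fin 1 → Fin n => P (J 0)) (fun J => hP _)
    (altForm_fin_one P) fun J z hz => by rw [dbarF_fin_one]; exact hclosed _ _ z hz
  refine ⟨u Fin.elim0, hu _, fun m z hz => ?_⟩
  simpa only [dbarF_fin_zero] using hdu (fun _ => m) z hz

lemma DbarSolvableOn.exists_dbarOne_eq (hsolv : DbarSolvableOn Ω 1)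
    {G : Fin n → Fin n → (Fin n → ℂ) → ℂ} (hG : ∀ k l, BddSmoothOn Ω (G k l))
    (hanti : ∀ k l z, G l k z = -G k l z)
    (hclosed : ∀ J, ∀ z ∈ Ω, dbarF (fun K : Fin 2 → Fin n => G (K 0) (K 1)) J z = 0) :
    ∃ v : Fin n → (Fin n → ℂ) → ℂ,
      (∀ m, BddSmoothOn Ω (v m)) ∧ ∀ k l, ∀ z ∈ Ω, dbarOne v k l z = G k l z := by
  obtain ⟨u, hu, -, hdu⟩ := hsolv _ (fun J => hG _ _) (altForm_fin_two hanti) hclosed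
  refine ⟨fun m => u fun _ => m, fun m => hu _, fun k l z hz => ?_⟩
  simpa only [dbarF_fin_one, Matrix.cons_val_zero, Matrix.cons_val_one] using hdu ![k, l] z hz

end Solvability

section Koszul

open ComplexConjugate

variable {n : ℕ} {a : ℝ}

noncomputable def sqNorm (z : Fin n → ℂ) : ℝ := ∑ j, ‖z j‖ ^ 2

lemma contDiff_sqNorm : ContDiff ℝ (⊤ : ℕ∞) (sqNorm (n := n)) :=
  ContDiff.sum fun j _ => (contDiff_norm_sq ℝ).comp (contDiff_apply ℝ ℂ j)

noncomputable def recipCutoff (a t : ℝ) : ℝ := Real.smoothTransition (2 * t / a - 1) / t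

lemma contDiff_recipCutoff (ha : 0 < a) : ContDiff ℝ (⊤ : ℕ∞) (recipCutoff a) := by
  rw [contDiff_iff_contDiffAt]
  intro t
  rcases lt_or_ge t (a / 2) with ht | ht
  · refine contDiffAt_const (c := (0 : ℝ)) |>.congr_of_eventuallyEq ?_
    filter_upwards [Iio_mem_nhds ht] with s hs
    rw [Set.mem_Iio, lt_div_iff₀ two_pos] at hs
    rw [recipCutoff, Real.smoothTransition.zero_of_nonpos, zero_div]
    rw [sub_nonpos, div_le_one ha]
    linarith
  · exact ((Real.smoothTransition.contDiff.comp
      ((contDiff_const.mul contDiff_id).div_const a |>.sub contDiff_const)).contDiffAt).div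
      contDiffAt_id (by linarith)

lemma recipCutoff_mul_self {t : ℝ} (ha : 0 < a) (ht : a ≤ t) : recipCutoff a t * t = 1 := by
  have h1 : 1 ≤ 2 * t / a - 1 := by rw [le_sub_iff_add_le, le_div_iff₀ ha]; linarith
  rw [recipCutoff, Real.smoothTransition.one_of_one_le h1, one_div_mul_cancel (by linarith)]

noncomputable def bezoutCoeff (a : ℝ) (i : Fin n) (z : Fin n → ℂ) : ℂ :=
  recipCutoff a (sqNorm z) * conj (z i)

lemma contDiff_bezoutCoeff (ha : 0 < a) (i : Fin n) : ContDiff ℝ (⊤ : ℕ∞) (bezoutCoeff a i) :=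
  (ofRealCLM.contDiff.comp ((contDiff_recipCutoff ha).comp contDiff_sqNorm)).mul
    (conjCLE.contDiff.comp (contDiff_apply ℝ ℂ i))

lemma sum_mul_bezoutCoeff (ha : 0 < a) {z : Fin n → ℂ} (hz : a ≤ sqNorm z) :
    ∑ j, z j * bezoutCoeff a j z = 1 := by
  have h : ∑ j, z j * conj (z j) = (sqNorm z : ℂ) := by
    simp only [mul_conj, normSq_eq_norm_sq, sqNorm, ofReal_sum, ofReal_pow]
  simp only [bezoutCoeff, mul_left_comm (z _), ← Finset.mul_sum, h]
  exact_mod_cast recipCutoff_mul_self ha hz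

/-- `W i m` is the `m`-th coefficient of the `(0,1)`-form `W i`. -/
structure IsClosedSyzygy (Ω : Set (Fin n → ℂ)) (a : ℝ) (W : Fin n → Fin n → (Fin n → ℂ) → ℂ) :
    Prop where
  bddSmoothOn : ∀ i m, BddSmoothOn Ω (W i m)
  dbarOne_eq_zero : ∀ i k l, ∀ z ∈ Ω, dbarOne (W i) k l z = 0
  sum_mul_eq_zero : ∀ m, ∀ z ∈ Ω, ∑ i, z i * W i m z = 0
  eq_zero_of_sqNorm_lt : ∀ i m, ∀ z ∈ Ω, sqNorm z < a → W i m z = 0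

/-- The coefficients of `e ∧ W`, where `e = bezoutCoeff a`. -/
noncomputable def koszulPrimitive (a : ℝ) (W : Fin n → Fin n → (Fin n → ℂ) → ℂ) (i j m : Fin n)
    (z : Fin n → ℂ) : ℂ :=
  bezoutCoeff a i z * W j m z - bezoutCoeff a j z * W i m z

variable {Ω : Set (Fin n → ℂ)} {W : Fin n → Fin n → (Fin n → ℂ) → ℂ} {z : Fin n → ℂ}

lemma koszulPrimitive_swap (i j m : Fin n) (z : Fin n → ℂ) :
    koszulPrimitive a W j i m z = -koszulPrimitive a W i j m z := by
  rw [koszulPrimitive, koszulPrimitive, neg_sub]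

lemma koszulPrimitive_self (i m : Fin n) (z : Fin n → ℂ) : koszulPrimitive a W i i m z = 0 :=
  sub_self _

lemma dbarOne_koszulPrimitive_swap (i j k l : Fin n) (z : Fin n → ℂ) :
    dbarOne (koszulPrimitive a W j i) k l z = -dbarOne (koszulPrimitive a W i j) k l z := by
  have h (m : Fin n) : koszulPrimitive a W j i m = fun w => -koszulPrimitive a W i j m w :=
    funext (koszulPrimitive_swap i j m)
  rw [dbarOne, dbarOne, h, h, wdbar_neg, wdbar_neg, neg_sub_neg, neg_sub]

lemma dbarOne_koszulPrimitive_self (i k l : Fin n) (z : Fin n → ℂ) :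
    dbarOne (koszulPrimitive a W i i) k l z = 0 := by
  have h (m : Fin n) : koszulPrimitive a W i i m = fun _ => 0 := funext (koszulPrimitive_self i m)
  rw [dbarOne, h, h, wdbar_const, wdbar_const, sub_self]

lemma isOpen_inter_sqNorm_lt (hΩ : IsOpen Ω) (a : ℝ) : IsOpen (Ω ∩ {w | sqNorm w < a}) :=
  hΩ.inter (isOpen_lt contDiff_sqNorm.continuous continuous_const)

namespace IsClosedSyzygy

lemma bddSmoothOn_koszulPrimitive (hW : IsClosedSyzygy Ω a W) (hΩ : IsBounded Ω) (ha : 0 < a)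
    (i j m : Fin n) : BddSmoothOn Ω (koszulPrimitive a W i j m) :=
  ((BddSmoothOn.of_contDiff hΩ (contDiff_bezoutCoeff ha i)).mul (hW.bddSmoothOn j m)).sub
    ((BddSmoothOn.of_contDiff hΩ (contDiff_bezoutCoeff ha j)).mul (hW.bddSmoothOn i m))

lemma differentiableAt_koszulPrimitive (hW : IsClosedSyzygy Ω a W) (hΩ : IsOpen Ω)
    (hΩ' : IsBounded Ω) (ha : 0 < a) (hz : z ∈ Ω) (i j m : Fin n) :
    DifferentiableAt ℝ (koszulPrimitive a W i j m) z :=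
  (hW.bddSmoothOn_koszulPrimitive hΩ' ha i j m).1.differentiableAt_of_isOpen hΩ hz

/-- Where `W ≠ 0` we have `∑ j, z j * e j = 1`, so `z ⌟ (e ∧ W) = W - e ∧ (z ⌟ W) = W`. -/
lemma sum_mul_koszulPrimitive (hW : IsClosedSyzygy Ω a W) (ha : 0 < a) (hz : z ∈ Ω)
    (i m : Fin n) : ∑ j, z j * koszulPrimitive a W j i m z = W i m z := by
  rcases lt_or_ge (sqNorm z) a with hlt | hge
  · simp [koszulPrimitive, hW.eq_zero_of_sqNorm_lt _ m z hz hlt]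
  · have hsyz := hW.sum_mul_eq_zero m z hz
    simp only [koszulPrimitive, mul_sub, Finset.sum_sub_distrib]
    simp only [← mul_assoc, ← Finset.sum_mul, sum_mul_bezoutCoeff ha hge, one_mul]
    simp only [mul_comm _ (bezoutCoeff a i z), mul_assoc, ← Finset.mul_sum, hsyz, mul_zero,
      sub_zero]

lemma dbarOne_koszulPrimitive_eq_zero (hW : IsClosedSyzygy Ω a W) (hΩ : IsOpen Ω) (hz : z ∈ Ω)
    (hlt : sqNorm z < a) (i j k l : Fin n) : dbarOne (koszulPrimitive a W i j) k l z = 0 := by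
  have hU := isOpen_inter_sqNorm_lt hΩ a
  have hzero (m : Fin n) : ∀ w ∈ Ω ∩ {w | sqNorm w < a}, koszulPrimitive a W i j m w = 0 :=
    fun w ⟨hw, hw'⟩ => by
      simp [koszulPrimitive, hW.eq_zero_of_sqNorm_lt _ m w hw hw']
  rw [dbarOne, wdbar_eq_zero_of_eqOn hU ⟨hz, hlt⟩ (hzero l),
    wdbar_eq_zero_of_eqOn hU ⟨hz, hlt⟩ (hzero k), sub_zero]

/-- The `∂̄` of the identity `z ⌟ (e ∧ W) = W`, since the coordinates are holomorphic. -/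
lemma sum_mul_dbarOne_koszulPrimitive (hW : IsClosedSyzygy Ω a W) (hΩ : IsOpen Ω)
    (hΩ' : IsBounded Ω) (ha : 0 < a) (hz : z ∈ Ω) (i k l : Fin n) :
    ∑ j, z j * dbarOne (koszulPrimitive a W j i) k l z = 0 := by
  have hd := hW.differentiableAt_koszulPrimitive hΩ hΩ' ha hz
  have hwdbar (m c : Fin n) :
      ∑ j, z j * wdbar (koszulPrimitive a W j i m) c z = wdbar (W i m) c z := by
    have hev : (fun w => ∑ j, w j * koszulPrimitive a W j i m w) =ᶠ[𝓝 z] W i m := by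
      filter_upwards [hΩ.mem_nhds hz] with w hw
      exact hW.sum_mul_koszulPrimitive ha hw i m
    rw [← wdbar_congr hev, wdbar_sum _ fun j _ => (differentiableAt_apply j z).fun_mul (hd j i m)]
    simp only [wdbar_coord_mul (hd _ i m)]
  simp only [dbarOne, mul_sub, Finset.sum_sub_distrib, hwdbar]
  exact hW.dbarOne_eq_zero i k l z hz

/-- Closedness of `W` removes the derivatives of `W` from `∂̄(e ∧ W)`. -/
lemma dbarOne_koszulPrimitive_eq (hW : IsClosedSyzygy Ω a W) (hΩ : IsOpen Ω) (ha : 0 < a)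
    (hz : z ∈ Ω) (i j k l : Fin n) :
    dbarOne (koszulPrimitive a W i j) k l z
      = W j l z * wdbar (bezoutCoeff a i) k z - W j k z * wdbar (bezoutCoeff a i) l z
        - W i l z * wdbar (bezoutCoeff a j) k z + W i k z * wdbar (bezoutCoeff a j) l z := by
  have hE (p : Fin n) : DifferentiableAt ℝ (bezoutCoeff a p) z :=
    (contDiff_bezoutCoeff ha p).differentiable (by simp) z
  have hW' (p q : Fin n) : DifferentiableAt ℝ (W p q) z :=
    (hW.bddSmoothOn p q).1.differentiableAt_of_isOpen hΩ hz
  have hprim (m c : Fin n) : wdbar (koszulPrimitive a W i j m) c z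
      = bezoutCoeff a i z * wdbar (W j m) c z + W j m z * wdbar (bezoutCoeff a i) c z
        - (bezoutCoeff a j z * wdbar (W i m) c z + W i m z * wdbar (bezoutCoeff a j) c z) := by
    unfold koszulPrimitive
    rw [wdbar_sub ((hE i).fun_mul (hW' j m)) ((hE j).fun_mul (hW' i m)),
      wdbar_mul (hE i) (hW' j m), wdbar_mul (hE j) (hW' i m)]
  have hj := hW.dbarOne_eq_zero j k l z hz
  have hi := hW.dbarOne_eq_zero i k l z hz
  rw [dbarOne] at hi hj ⊢
  rw [hprim, hprim]
  linear_combination bezoutCoeff a i z * hj - bezoutCoeff a j z * hi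

lemma bddSmoothOn_dbarOne_koszulPrimitive (hW : IsClosedSyzygy Ω a W) (hΩ : IsOpen Ω)
    (hΩ' : IsBounded Ω) (ha : 0 < a) (i j k l : Fin n) :
    BddSmoothOn Ω (dbarOne (koszulPrimitive a W i j) k l) := by
  have hE (p c : Fin n) : BddSmoothOn Ω (wdbar (bezoutCoeff a p) c) :=
    BddSmoothOn.of_contDiff hΩ'
      (contDiffOn_univ.mp (((contDiff_bezoutCoeff ha p).contDiffOn).wdbar isOpen_univ c))
  refine BddSmoothOn.congr ?_ fun z hz => hW.dbarOne_koszulPrimitive_eq hΩ ha hz i j k l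
  exact ((((hW.bddSmoothOn j l).mul (hE i k)).sub ((hW.bddSmoothOn j k).mul (hE i l))).sub
    ((hW.bddSmoothOn i l).mul (hE j k))).add ((hW.bddSmoothOn i k).mul (hE j l))

end IsClosedSyzygy

/-- Exactness in degree two of the Koszul complex of a unimodular `z ∈ R³`; the antisymmetric `B`
is encoded by `i ↦ B (i + 1) (i + 2)`. -/
lemma koszul_exact_two {R : Type*} [CommRing R] {z e : Fin 3 → R} (he : ∑ j, z j * e j = 1)
    {B : Fin 3 → Fin 3 → R} (hanti : ∀ i j, B j i = -B i j) (hdiag : ∀ i, B i i = 0)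
    (hcycle : ∀ i, ∑ j, z j * B j i = 0) (i : Fin 3) :
    B (i + 1) (i + 2) = z i * ∑ j, e j * B (j + 1) (j + 2) := by
  have c0 := hcycle 0
  have c1 := hcycle 1
  have c2 := hcycle 2
  simp only [Fin.sum_univ_three, hdiag, hanti 0 1, hanti 1 2, hanti 2 0] at c0 c1 c2 he
  fin_cases i <;>
    simp only [Fin.zero_eta, Fin.mk_one, Fin.reduceFinMk, Fin.isValue, Fin.reduceAdd,
      Fin.sum_univ_three, zero_add]
  · linear_combination (-B 1 2) * he + e 1 * c2 - e 2 * c1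
  · linear_combination (-B 2 0) * he - e 0 * c2 + e 2 * c0
  · linear_combination (-B 0 1) * he + e 0 * c1 - e 1 * c0

section DimThree

variable {a : ℝ} {Ω : Set (Fin 3 → ℂ)} {W : Fin 3 → Fin 3 → (Fin 3 → ℂ) → ℂ} {z : Fin 3 → ℂ}

/-- The `(0,2)`-form `G` with `∂̄(e ∧ W) = z ⌟ (G dz₀ ∧ dz₁ ∧ dz₂)`. -/
noncomputable def koszulObstruction (a : ℝ) (W : Fin 3 → Fin 3 → (Fin 3 → ℂ) → ℂ) (k l : Fin 3)
    (z : Fin 3 → ℂ) : ℂ :=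
  ∑ i, bezoutCoeff a i z * dbarOne (koszulPrimitive a W (i + 1) (i + 2)) k l z

lemma koszulObstruction_swap (k l : Fin 3) (z : Fin 3 → ℂ) :
    koszulObstruction a W l k z = -koszulObstruction a W k l z := by
  simp only [koszulObstruction, dbarOne_swap _ k l, mul_neg, Finset.sum_neg_distrib]

namespace IsClosedSyzygy

lemma koszulObstruction_eq_zero (hW : IsClosedSyzygy Ω a W) (hΩ : IsOpen Ω) (hz : z ∈ Ω)
    (hlt : sqNorm z < a) (k l : Fin 3) : koszulObstruction a W k l z = 0 := by
  simp [koszulObstruction, hW.dbarOne_koszulPrimitive_eq_zero hΩ hz hlt]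

lemma dbarOne_koszulPrimitive_eq_mul (hW : IsClosedSyzygy Ω a W) (hΩ : IsOpen Ω)
    (hΩ' : IsBounded Ω) (ha : 0 < a) (hz : z ∈ Ω) (i k l : Fin 3) :
    dbarOne (koszulPrimitive a W (i + 1) (i + 2)) k l z = z i * koszulObstruction a W k l z := by
  rcases lt_or_ge (sqNorm z) a with hlt | hge
  · rw [hW.dbarOne_koszulPrimitive_eq_zero hΩ hz hlt, hW.koszulObstruction_eq_zero hΩ hz hlt,
      mul_zero]
  · exact koszul_exact_two (sum_mul_bezoutCoeff ha hge)
      (fun i j => dbarOne_koszulPrimitive_swap i j k l z)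
      (fun i => dbarOne_koszulPrimitive_self i k l z)
      (fun i => hW.sum_mul_dbarOne_koszulPrimitive hΩ hΩ' ha hz i k l) i

lemma bddSmoothOn_koszulObstruction (hW : IsClosedSyzygy Ω a W) (hΩ : IsOpen Ω)
    (hΩ' : IsBounded Ω) (ha : 0 < a) (k l : Fin 3) :
    BddSmoothOn Ω (koszulObstruction a W k l) :=
  BddSmoothOn.sum _ fun i _ => (BddSmoothOn.of_contDiff hΩ' (contDiff_bezoutCoeff ha i)).mul
    (hW.bddSmoothOn_dbarOne_koszulPrimitive hΩ hΩ' ha _ _ k l)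

/-- Near `0` the form `G` vanishes; elsewhere some `z i ≠ 0`, and `z i • ∂̄G = ∂̄∂̄(e ∧ W) = 0`. -/
lemma dbarF_koszulObstruction (hW : IsClosedSyzygy Ω a W) (hΩ : IsOpen Ω)
    (hΩ' : IsBounded Ω) (ha : 0 < a) (J : Fin 3 → Fin 3) (hz : z ∈ Ω) :
    dbarF (fun K : Fin 2 → Fin 3 => koszulObstruction a W (K 0) (K 1)) J z = 0 := by
  rw [dbarF_fin_two]
  rcases lt_or_ge (sqNorm z) a with hlt | hge
  · have hzero (p q : Fin 3) : ∀ w ∈ Ω ∩ {w | sqNorm w < a}, koszulObstruction a W p q w = 0 :=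
      fun w hw => hW.koszulObstruction_eq_zero hΩ hw.1 hw.2 p q
    have hU := isOpen_inter_sqNorm_lt hΩ a
    rw [wdbar_eq_zero_of_eqOn hU ⟨hz, hlt⟩ (hzero _ _), wdbar_eq_zero_of_eqOn hU ⟨hz, hlt⟩
      (hzero _ _), wdbar_eq_zero_of_eqOn hU ⟨hz, hlt⟩ (hzero _ _), sub_zero, add_zero]
  · obtain ⟨i, hi⟩ : ∃ i, z i ≠ 0 := by
      by_contra! h
      have : sqNorm z = 0 := by simp [sqNorm, h]
      linarith
    have hmul (p q c : Fin 3) : z i * wdbar (koszulObstruction a W p q) c z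
        = wdbar (dbarOne (koszulPrimitive a W (i + 1) (i + 2)) p q) c z := by
      rw [← wdbar_coord_mul
        ((hW.bddSmoothOn_koszulObstruction hΩ hΩ' ha p q).1.differentiableAt_of_isOpen hΩ hz)]
      refine wdbar_congr ?_
      filter_upwards [hΩ.mem_nhds hz] with w hw
      exact (hW.dbarOne_koszulPrimitive_eq_mul hΩ hΩ' ha hw i p q).symm
    have hsq := dbarF_dbarOne hΩ
      (fun m => (hW.bddSmoothOn_koszulPrimitive hΩ' ha (i + 1) (i + 2) m).1) J hz
    rw [dbarF_fin_two, ← hmul, ← hmul, ← hmul] at hsq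
    refine (mul_eq_zero.mp ?_).resolve_left hi
    linear_combination hsq

/-- With `∂̄v = G`, each `(e ∧ W)_{i+1,i+2} - z i • v` is `∂̄`-closed, hence `∂̄` of some `Y i`;
contracting with `z` then gives `W = ∂̄Y × z`. -/
theorem exists_cross_potential (hW : IsClosedSyzygy Ω a W) (hΩ : IsOpen Ω) (hΩ' : IsBounded Ω)
    (ha : 0 < a) (hsolv₀ : DbarSolvableOn Ω 0) (hsolv₁ : DbarSolvableOn Ω 1) :
    ∃ Y : Fin 3 → (Fin 3 → ℂ) → ℂ, (∀ i, BddSmoothOn Ω (Y i)) ∧ ∀ i m, ∀ z ∈ Ω,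
      W i m z = z (i + 2) * wdbar (Y (i + 1)) m z - z (i + 1) * wdbar (Y (i + 2)) m z := by
  obtain ⟨v, hv, hdv⟩ := hsolv₁.exists_dbarOne_eq (hW.bddSmoothOn_koszulObstruction hΩ hΩ' ha)
    koszulObstruction_swap fun J z hz => hW.dbarF_koszulObstruction hΩ hΩ' ha J hz
  have hY (i : Fin 3) : ∃ y, BddSmoothOn Ω y ∧ ∀ m, ∀ z ∈ Ω,
      wdbar y m z = koszulPrimitive a W (i + 1) (i + 2) m z - z i * v m z := by
    refine hsolv₀.exists_wdbar_eq (fun m => (hW.bddSmoothOn_koszulPrimitive hΩ' ha _ _ m).sub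
      ((BddSmoothOn.coord hΩ' i).mul (hv m))) fun k l z hz => ?_
    rw [dbarOne_sub_coord_mul (hW.differentiableAt_koszulPrimitive hΩ hΩ' ha hz _ _)
      (fun m => (hv m).1.differentiableAt_of_isOpen hΩ hz), hdv k l z hz,
      hW.dbarOne_koszulPrimitive_eq_mul hΩ hΩ' ha hz, sub_self]
  choose Y hYsmooth hdY using hY
  refine ⟨Y, hYsmooth, fun i m z hz => ?_⟩
  rw [hdY _ m z hz, hdY _ m z hz, ← hW.sum_mul_koszulPrimitive ha hz i m]
  fin_cases i <;>
    simp only [Fin.zero_eta, Fin.mk_one, Fin.reduceFinMk, Fin.isValue, Fin.reduceAdd,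
      Fin.sum_univ_three, koszulPrimitive_self, mul_zero, zero_add, add_zero]
  · rw [koszulPrimitive_swap 0 1]; ring
  · rw [koszulPrimitive_swap 1 2]; ring
  · rw [koszulPrimitive_swap 2 0]; ring

end IsClosedSyzygy

end DimThree

theorem koszul_dim_three_Linf_general (Ω : Set (Fin 3 → ℂ))
    (hopen : IsOpen Ω) (hbdd : Bornology.IsBounded Ω)
    (hsolv : ∀ t : ℕ, t + 1 ≤ 3 →
      ∀ β : (Fin (t + 1) → Fin 3) → (Fin 3 → ℂ) → ℂ,
        (∀ J, BddSmoothOn Ω (β J)) → AltForm β →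
        (∀ J, ∀ z ∈ Ω, dbarF β J z = 0) →
        ∃ u : (Fin t → Fin 3) → (Fin 3 → ℂ) → ℂ,
          (∀ J, BddSmoothOn Ω (u J)) ∧ AltForm u ∧
          ∀ J, ∀ z ∈ Ω, dbarF u J z = β J z)
    (w1 w2 w3 : Fin 3 → (Fin 3 → ℂ) → ℂ)
    (hsm : ∀ k, BddSmoothOn Ω (w1 k) ∧ BddSmoothOn Ω (w2 k) ∧ BddSmoothOn Ω (w3 k))
    (hcl : ∀ k l : Fin 3, ∀ z ∈ Ω,
      wdbar (w1 l) k z = wdbar (w1 k) l z ∧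
      wdbar (w2 l) k z = wdbar (w2 k) l z ∧
      wdbar (w3 l) k z = wdbar (w3 k) l z)
    (htau : ∀ k : Fin 3, ∀ z ∈ Ω, z 0 * w1 k z + z 1 * w2 k z + z 2 * w3 k z = 0)
    (hsupp : ∃ ε > 0, ∀ k : Fin 3, ∀ z ∈ Ω, (∑ j : Fin 3, ‖z j‖ ^ 2) < ε ^ 2 →
      w1 k z = 0 ∧ w2 k z = 0 ∧ w3 k z = 0) :
    ∃ y1 y2 y3 : (Fin 3 → ℂ) → ℂ,
      BddSmoothOn Ω y1 ∧ BddSmoothOn Ω y2 ∧ BddSmoothOn Ω y3 ∧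
      ∀ k : Fin 3, ∀ z ∈ Ω,
        w1 k z = -(z 1) * wdbar y3 k z - z 2 * wdbar y2 k z ∧
        w2 k z = z 0 * wdbar y3 k z - z 2 * wdbar y1 k z ∧
        w3 k z = z 0 * wdbar y2 k z + z 1 * wdbar y1 k z := by
  obtain ⟨ε, hε, hvanish⟩ := hsupp
  have hW : IsClosedSyzygy Ω (ε ^ 2) ![w1, w2, w3] := by
    refine ⟨fun i m => ?_, fun i k l z hz => ?_, fun m z hz => ?_, fun i m z hz hlt => ?_⟩
    · fin_cases i
      exacts [(hsm m).1, (hsm m).2.1, (hsm m).2.2]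
    · rw [dbarOne, sub_eq_zero]
      fin_cases i
      exacts [(hcl k l z hz).1, (hcl k l z hz).2.1, (hcl k l z hz).2.2]
    · simpa [Fin.sum_univ_three] using htau m z hz
    · fin_cases i
      exacts [(hvanish m z hz hlt).1, (hvanish m z hz hlt).2.1, (hvanish m z hz hlt).2.2]
  obtain ⟨Y, hY, hWY⟩ := hW.exists_cross_potential hopen hbdd (by positivity)
    (hsolv 0 (by norm_num)) (hsolv 1 (by norm_num))
  refine ⟨Y 0, fun z => -Y 1 z, Y 2, hY 0, (hY 1).neg, hY 2, fun k z hz => ?_⟩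
  have h0 := hWY 0 k z hz
  have h1 := hWY 1 k z hz
  have h2 := hWY 2 k z hz
  simp only [Fin.isValue, Matrix.cons_val', Matrix.cons_val_fin_one, Matrix.cons_val,
    Matrix.cons_val_zero, Matrix.cons_val_one, Fin.reduceAdd] at h0 h1 h2
  simp only [wdbar_neg]
  exact ⟨by linear_combination h0, by linear_combination h1, by linear_combination h2⟩

/-- The `∂̄`-Koszul complex proposition in `ℂ³` (case `r = 1`, `s = 1`, `F = (z₁, z₂, z₃)`),
for bounded smooth data. -/
theorem koszul_dim_three_Linf (Ω : Set (Fin 3 → ℂ))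
    (hopen : IsOpen Ω) (hconn : IsConnected Ω) (hbdd : Bornology.IsBounded Ω)
    (h0 : (0 : Fin 3 → ℂ) ∈ Ω)
    (hsolv : ∀ t : ℕ, t + 1 ≤ 3 →
      ∀ β : (Fin (t + 1) → Fin 3) → (Fin 3 → ℂ) → ℂ,
        (∀ J, BddSmoothOn Ω (β J)) → AltForm β →
        (∀ J, ∀ z ∈ Ω, dbarF β J z = 0) →
        ∃ u : (Fin t → Fin 3) → (Fin 3 → ℂ) → ℂ,
          (∀ J, BddSmoothOn Ω (u J)) ∧ AltForm u ∧
          ∀ J, ∀ z ∈ Ω, dbarF u J z = β J z)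
    (w1 w2 w3 : Fin 3 → (Fin 3 → ℂ) → ℂ)
    (hsm : ∀ k, BddSmoothOn Ω (w1 k) ∧ BddSmoothOn Ω (w2 k) ∧ BddSmoothOn Ω (w3 k))
    (hcl : ∀ k l : Fin 3, ∀ z ∈ Ω,
      wdbar (w1 l) k z = wdbar (w1 k) l z ∧
      wdbar (w2 l) k z = wdbar (w2 k) l z ∧
      wdbar (w3 l) k z = wdbar (w3 k) l z)
    (htau : ∀ k : Fin 3, ∀ z ∈ Ω, z 0 * w1 k z + z 1 * w2 k z + z 2 * w3 k z = 0)
    (hsupp : ∃ ε > 0, ∀ k : Fin 3, ∀ z ∈ Ω, (∑ j : Fin 3, ‖z j‖ ^ 2) < ε ^ 2 →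
      w1 k z = 0 ∧ w2 k z = 0 ∧ w3 k z = 0) :
    ∃ y1 y2 y3 : (Fin 3 → ℂ) → ℂ,
      BddSmoothOn Ω y1 ∧ BddSmoothOn Ω y2 ∧ BddSmoothOn Ω y3 ∧
      ∀ k : Fin 3, ∀ z ∈ Ω,
        w1 k z = -(z 1) * wdbar y3 k z - z 2 * wdbar y2 k z ∧
        w2 k z = z 0 * wdbar y3 k z - z 2 * wdbar y1 k z ∧
        w3 k z = z 0 * wdbar y2 k z + z 1 * wdbar y1 k z :=
  koszul_dim_three_Linf_general Ω hopen hbdd hsolv w1 w2 w3 hsm hcl htau hsupp
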